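/- arXiv:1806.00230 — 3 statements merged into one kernel-verified Lean document; each statement's English description precedes it below -/
import Mathlib

section
/- Let M, N : I² → I be means and φ : ℓ∞(I) → I a 2-limit-like function. Define B_φ(x,y) := φ(x₀,y₀,x₁,y₁,x₂,y₂,...), the interleaved orbit sequence of (M,N) starting at (x,y). Then B_φ is an (M,N)-invariant mean. -/
def IsMean (I : Set ℝ) (M : ℝ → ℝ → ℝ) : Prop :=
  ∀ x ∈ I, ∀ y ∈ I, M x y ∈ I ∧ min x y ≤ M x y ∧ M x y ≤ max x y

def IsInvariantMean (I : Set ℝ) (M N K : ℝ → ℝ → ℝ) : Prop :=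
  ∀ x ∈ I, ∀ y ∈ I, K x y = K (M x y) (N x y)

def orbit (M N : ℝ → ℝ → ℝ) (x y : ℝ) : ℕ → ℝ × ℝ
  | 0 => (x, y)
  | n + 1 => (M (orbit M N x y n).1 (orbit M N x y n).2,
      N (orbit M N x y n).1 (orbit M N x y n).2)

def TwoLimitLike (I : Set ℝ) (φ : (ℕ → ℝ) → ℝ) : Prop :=
  ∀ a : ℕ → ℝ, (∀ n, a n ∈ I) → BddAbove (Set.range a) → BddBelow (Set.range a) →
    φ (fun n => a (n + 2)) = φ a ∧
    Filter.liminf a Filter.atTop ≤ φ a ∧ φ a ≤ Filter.limsup a Filter.atTop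

/-- The interleaved orbit sequence `x₀, y₀, x₁, y₁, x₂, y₂, …`. -/
def interOrbit (M N : ℝ → ℝ → ℝ) (x y : ℝ) (n : ℕ) : ℝ :=
  if n % 2 = 0 then (orbit M N x y (n / 2)).1 else (orbit M N x y (n / 2)).2

lemma orbit_prop (I : Set ℝ) (M N : ℝ → ℝ → ℝ) (hM : IsMean I M) (hN : IsMean I N)
    (x y : ℝ) (hx : x ∈ I) (hy : y ∈ I) (n : ℕ) :
    (orbit M N x y n).1 ∈ I ∧ (orbit M N x y n).2 ∈ I ∧
    min x y ≤ (orbit M N x y n).1 ∧ (orbit M N x y n).1 ≤ max x y ∧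
    min x y ≤ (orbit M N x y n).2 ∧ (orbit M N x y n).2 ≤ max x y := by
  induction n with
  | zero =>
    refine ⟨hx, hy, min_le_left _ _, le_max_left _ _, min_le_right _ _, le_max_right _ _⟩
  | succ n ih =>
    obtain ⟨h1, h2, h3, h4, h5, h6⟩ := ih
    obtain ⟨hMI, hMl, hMu⟩ := hM _ h1 _ h2
    obtain ⟨hNI, hNl, hNu⟩ := hN _ h1 _ h2
    refine ⟨hMI, hNI, le_trans (le_min h3 h5) hMl, le_trans hMu (max_le h4 h6),
      le_trans (le_min h3 h5) hNl, le_trans hNu (max_le h4 h6)⟩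

lemma orbit_shift (M N : ℝ → ℝ → ℝ) (x y : ℝ) (n : ℕ) :
    orbit M N (M x y) (N x y) n = orbit M N x y (n + 1) := by
  induction n with
  | zero => rfl
  | succ n ih => simp [orbit, ih]

lemma interOrbit_shift (M N : ℝ → ℝ → ℝ) (x y : ℝ) :
    (fun n => interOrbit M N x y (n + 2)) = interOrbit M N (M x y) (N x y) := by
  funext n
  simp [interOrbit, Nat.add_mod_right, Nat.add_div_right, orbit_shift]

/-- `B_φ(x,y) := φ(x₀,y₀,x₁,y₁,…)` is an `(M,N)`-invariant mean. -/
theorem stmt7 (I : Set ℝ) (hI : I.OrdConnected) (M N : ℝ → ℝ → ℝ)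
    (hM : IsMean I M) (hN : IsMean I N)
    (φ : (ℕ → ℝ) → ℝ) (hφ : TwoLimitLike I φ) :
    IsMean I (fun x y => φ (interOrbit M N x y)) ∧
    IsInvariantMean I M N (fun x y => φ (interOrbit M N x y)) := by
  have key : ∀ x ∈ I, ∀ y ∈ I,
      (∀ n, interOrbit M N x y n ∈ I) ∧
      (∀ n, min x y ≤ interOrbit M N x y n) ∧
      (∀ n, interOrbit M N x y n ≤ max x y) := by
    intro x hx y hy
    refine ⟨fun n => ?_, fun n => ?_, fun n => ?_⟩ <;>
    · obtain ⟨h1, h2, h3, h4, h5, h6⟩ := orbit_prop I M N hM hN x y hx hy (n / 2)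
      unfold interOrbit
      split <;> assumption
  constructor
  · intro x hx y hy
    obtain ⟨hmem, hlo, hhi⟩ := key x hx y hy
    have hba : BddAbove (Set.range (interOrbit M N x y)) :=
      ⟨max x y, by rintro _ ⟨n, rfl⟩; exact hhi n⟩
    have hbb : BddBelow (Set.range (interOrbit M N x y)) :=
      ⟨min x y, by rintro _ ⟨n, rfl⟩; exact hlo n⟩
    obtain ⟨_, h1, h2⟩ := hφ _ hmem hba hbb
    have hbu : Filter.IsBoundedUnder (· ≤ ·) Filter.atTop (interOrbit M N x y) :=
      Filter.isBoundedUnder_of ⟨max x y, hhi⟩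
    have hbl : Filter.IsBoundedUnder (· ≥ ·) Filter.atTop (interOrbit M N x y) :=
      Filter.isBoundedUnder_of ⟨min x y, hlo⟩
    have hliminf : min x y ≤ Filter.liminf (interOrbit M N x y) Filter.atTop :=
      Filter.le_liminf_of_le hbu.isCoboundedUnder_ge (Filter.Eventually.of_forall hlo)
    have hlimsup : Filter.limsup (interOrbit M N x y) Filter.atTop ≤ max x y :=
      Filter.limsup_le_of_le hbl.isCoboundedUnder_le (Filter.Eventually.of_forall hhi)
    have hlo' := le_trans hliminf h1
    have hhi' := le_trans h2 hlimsup
    have hminI : min x y ∈ I := by rcases min_cases x y with ⟨h, _⟩ | ⟨h, _⟩ <;> rw [h] <;> assumption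
    have hmaxI : max x y ∈ I := by rcases max_cases x y with ⟨h, _⟩ | ⟨h, _⟩ <;> rw [h] <;> assumption
    exact ⟨hI.out hminI hmaxI ⟨hlo', hhi'⟩, hlo', hhi'⟩
  · intro x hx y hy
    obtain ⟨hmem, hlo, hhi⟩ := key x hx y hy
    have hba : BddAbove (Set.range (interOrbit M N x y)) :=
      ⟨max x y, by rintro _ ⟨n, rfl⟩; exact hhi n⟩
    have hbb : BddBelow (Set.range (interOrbit M N x y)) :=
      ⟨min x y, by rintro _ ⟨n, rfl⟩; exact hlo n⟩
    obtain ⟨hs, _, _⟩ := hφ _ hmem hba hbb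
    simp only
    rw [← hs, interOrbit_shift]
end

section
/- Let M, N : I² → I be means with M ≤ N satisfying |M(x,y)−N(x,y)| < |x−y| for x ≠ y, and let Tr(x,y) := x_{ω₁} = y_{ω₁} be the transfinite invariant mean (common value of the transfinite iteration at the first uncountable ordinal). If K : I² → I is a continuous (M,N)-invariant mean, then K = Tr. In particular there is at most one continuous (M,N)-invariant mean. -/
/-!
From index `1` on, the transfinite orbit stays in `I` with `x_α` increasing, `y_α` decreasing
and `x_α ≤ y_α`. An invariant mean `K` is constant along the orbit: invariance handles successor
steps, and at a limit `α` the points `(x_β, y_β)` converge to `(x_α, y_α)` by monotone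
convergence, so continuity of `K` carries the value over. Since `ω₁` has uncountable cofinality,
the bounded monotone families `x_α`, `y_α` are constant from some countable `γ` up to `ω₁`;
hence `(x_{ω₁}, y_{ω₁})` is a fixed point of `(M, N)`, and `|M - N| < |x - y|` off the diagonal
forces `x_{ω₁} = y_{ω₁} = Tr(x, y)`. Thus `K(x, y) = K(Tr, Tr) = Tr`.
-/

open Ordinal

/-- The transfinite orbit of `(x,y)` under `(M,N)`: `x₀ = x`, `y₀ = y`,
`x_{α+1} = M(x_α, y_α)`, `y_{α+1} = N(x_α, y_α)`, and at limit ordinals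
`x_α = lim_{β↗α} x_β = sup_{1 ≤ β < α} x_β`, `y_α = lim_{β↗α} y_β = inf_{1 ≤ β < α} y_β`
(for `M ≤ N` the sequences are monotone from index `1` on, so these limits are the
suprema/infima of the tails). -/
noncomputable def tOrbit (M N : ℝ → ℝ → ℝ) (x y : ℝ) (o : Ordinal.{0}) : ℝ × ℝ :=
  Ordinal.limitRecOn o (x, y)
    (fun _ p => (M p.1 p.2, N p.1 p.2))
    (fun α _ ih =>
      (sSup {t : ℝ | ∃ β : Ordinal, ∃ h : β < α, 1 ≤ β ∧ (ih β h).1 = t},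
       sInf {t : ℝ | ∃ β : Ordinal, ∃ h : β < α, 1 ≤ β ∧ (ih β h).2 = t}))


/-- The transfinite invariant mean `Tr(x,y) := x_{ω₁} (= y_{ω₁})`. -/
noncomputable def Tr (M N : ℝ → ℝ → ℝ) (x y : ℝ) : ℝ :=
  (tOrbit M N x y ω₁).1

open Set Filter Topology

lemma IsMean.apply_self {I : Set ℝ} {K : ℝ → ℝ → ℝ} (hK : IsMean I K) {t : ℝ} (ht : t ∈ I) :
    K t t = t := by
  obtain ⟨-, hlow, hup⟩ := hK t ht t ht
  rw [min_self] at hlow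
  rw [max_self] at hup
  exact le_antisymm hup hlow

lemma IsMean.apply_mem_Icc {I : Set ℝ} {M : ℝ → ℝ → ℝ} (hM : IsMean I M) {x y : ℝ}
    (hx : x ∈ I) (hy : y ∈ I) (hxy : x ≤ y) : M x y ∈ Icc x y := by
  obtain ⟨-, hlow, hup⟩ := hM x hx y hy
  rw [min_eq_left hxy] at hlow
  rw [max_eq_right hxy] at hup
  exact ⟨hlow, hup⟩

lemma MonotoneOn.le_of_antitoneOn {ι α : Type*} [LinearOrder ι] [Preorder α] {f g : ι → α}
    {s : Set ι} (hf : MonotoneOn f s) (hg : AntitoneOn g s) (hfg : ∀ i ∈ s, f i ≤ g i)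
    {i j : ι} (hi : i ∈ s) (hj : j ∈ s) : f i ≤ g j := by
  rcases le_total i j with hij | hji
  · exact (hf hi hj hij).trans (hfg j hj)
  · exact (hfg i hi).trans (hg hj hi hji)

lemma csSup_image_le_csInf_image {ι α : Type*} [LinearOrder ι] [ConditionallyCompleteLattice α]
    {f g : ι → α} {s : Set ι} (hs : s.Nonempty) (hf : MonotoneOn f s) (hg : AntitoneOn g s)
    (hfg : ∀ i ∈ s, f i ≤ g i) : sSup (f '' s) ≤ sInf (g '' s) :=
  csSup_le (hs.image f) <| forall_mem_image.2 fun _ hi =>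
    le_csInf (hs.image g) <| forall_mem_image.2 fun _ hj => hf.le_of_antitoneOn hg hfg hi hj

lemma MonotoneOn.tendsto_atTop_csSup_image {ι α : Type*} [Preorder ι] [IsDirectedOrder ι]
    [ConditionallyCompleteLattice α] [TopologicalSpace α] [SupConvergenceClass α]
    {f : ι → α} {s : Set ι} (hf : MonotoneOn f s) (hbdd : BddAbove (f '' s)) :
    Tendsto (fun i : s => f i) atTop (𝓝 (sSup (f '' s))) := by
  rw [sSup_image']
  exact tendsto_atTop_ciSup (fun i j hij => hf i.2 j.2 hij) (by rwa [← image_eq_range])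

lemma AntitoneOn.tendsto_atTop_csInf_image {ι α : Type*} [Preorder ι] [IsDirectedOrder ι]
    [ConditionallyCompleteLattice α] [TopologicalSpace α] [InfConvergenceClass α]
    {f : ι → α} {s : Set ι} (hf : AntitoneOn f s) (hbdd : BddBelow (f '' s)) :
    Tendsto (fun i : s => f i) atTop (𝓝 (sInf (f '' s))) := by
  rw [sInf_image']
  exact tendsto_atTop_ciInf (fun i j hij => hf i.2 j.2 hij) (by rwa [← image_eq_range])

lemma MonotoneOn.exists_eq_csSup_image_Ico_omega_one {α : Type*}
    [ConditionallyCompleteLinearOrder α] [TopologicalSpace α] [OrderTopology α]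
    [FirstCountableTopology α] {f : Ordinal.{0} → α} {a : Ordinal.{0}} (ha : a < ω₁)
    (hf : MonotoneOn f (Ico a ω₁)) (hbdd : BddAbove (f '' Ico a ω₁)) :
    ∃ γ ∈ Ico a ω₁, f γ = sSup (f '' Ico a ω₁) := by
  obtain ⟨u, -, hu, hmem⟩ := exists_seq_tendsto_sSup ((nonempty_Ico.2 ha).image f) hbdd
  choose β hβ hfβ using hmem
  have hγ : ⨆ n, β n ∈ Ico a ω₁ :=
    ⟨(hβ 0).1.trans (Ordinal.le_iSup β 0), Ordinal.iSup_lt_omega_one fun n => (hβ n).2⟩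
  refine ⟨_, hγ, le_antisymm (le_csSup hbdd (mem_image_of_mem f hγ)) ?_⟩
  refine le_of_tendsto' hu fun n => ?_
  exact hfβ n ▸ hf (hβ n) hγ (Ordinal.le_iSup β n)

lemma AntitoneOn.exists_eq_csInf_image_Ico_omega_one {α : Type*}
    [ConditionallyCompleteLinearOrder α] [TopologicalSpace α] [OrderTopology α]
    [FirstCountableTopology α] {f : Ordinal.{0} → α} {a : Ordinal.{0}} (ha : a < ω₁)
    (hf : AntitoneOn f (Ico a ω₁)) (hbdd : BddBelow (f '' Ico a ω₁)) :
    ∃ γ ∈ Ico a ω₁, f γ = sInf (f '' Ico a ω₁) :=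
  MonotoneOn.exists_eq_csSup_image_Ico_omega_one (α := αᵒᵈ) ha hf hbdd

section Orbit

variable {M N : ℝ → ℝ → ℝ} {x y : ℝ}

@[simp]
lemma tOrbit_zero : tOrbit M N x y 0 = (x, y) :=
  Ordinal.limitRecOn_zero _ _ _

@[simp]
lemma tOrbit_add_one (α : Ordinal.{0}) :
    tOrbit M N x y (α + 1) =
      (M (tOrbit M N x y α).1 (tOrbit M N x y α).2, N (tOrbit M N x y α).1 (tOrbit M N x y α).2) :=
  Ordinal.limitRecOn_add_one _ _ _ _

lemma tOrbit_limit {α : Ordinal.{0}} (hα : Order.IsSuccLimit α) :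
    tOrbit M N x y α =
      (sSup ((fun β => (tOrbit M N x y β).1) '' Ico 1 α),
       sInf ((fun β => (tOrbit M N x y β).2) '' Ico 1 α)) := by
  rw [tOrbit, Ordinal.limitRecOn_limit _ _ _ _ hα]
  congr 2 <;> ext t <;> simp only [mem_ofPred_eq, mem_image, mem_Ico] <;>
    exact ⟨fun ⟨β, hβ, h1, h⟩ => ⟨β, ⟨h1, hβ⟩, h⟩, fun ⟨β, ⟨h1, hβ⟩, h⟩ => ⟨β, hβ, h1, h⟩⟩

variable {I : Set ℝ}

lemma tOrbit_mem_and_monotone (hI : I.OrdConnected) (hM : IsMean I M) (hN : IsMean I N)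
    (hMN : ∀ x ∈ I, ∀ y ∈ I, M x y ≤ N x y) (hx : x ∈ I) (hy : y ∈ I) (α : Ordinal.{0}) :
    tOrbit M N x y α ∈ I ×ˢ I ∧ (1 ≤ α → (tOrbit M N x y α).1 ≤ (tOrbit M N x y α).2) ∧
      ∀ β ∈ Icc 1 α, (tOrbit M N x y β).1 ≤ (tOrbit M N x y α).1 ∧
        (tOrbit M N x y α).2 ≤ (tOrbit M N x y β).2 := by
  induction α using Ordinal.limitRecOn with
  | zero =>
    have h10 : ¬(1 : Ordinal) ≤ 0 := not_le.2 zero_lt_one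
    rw [tOrbit_zero]
    exact ⟨mk_mem_prod hx hy, fun h => absurd h h10, fun β hβ => absurd (hβ.1.trans hβ.2) h10⟩
  | add_one γ ih =>
    obtain ⟨⟨hxγ, hyγ⟩, hγ_le, hγ_mono⟩ := ih
    rw [tOrbit_add_one]
    refine ⟨⟨(hM _ hxγ _ hyγ).1, (hN _ hxγ _ hyγ).1⟩, fun _ => hMN _ hxγ _ hyγ, ?_⟩
    rintro β ⟨h1β, hβ⟩
    rcases hβ.eq_or_lt with rfl | hβγ
    · rw [tOrbit_add_one]; exact ⟨le_rfl, le_rfl⟩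
    rw [Order.lt_add_one_iff] at hβγ
    have hle := hγ_le (h1β.trans hβγ)
    obtain ⟨hxβ, hyβ⟩ := hγ_mono β ⟨h1β, hβγ⟩
    exact ⟨hxβ.trans (hM.apply_mem_Icc hxγ hyγ hle).1,
      (hN.apply_mem_Icc hxγ hyγ hle).2.trans hyβ⟩
  | limit α hα ih =>
    set f := fun β => (tOrbit M N x y β).1
    set g := fun β => (tOrbit M N x y β).2
    have h1α : (1 : Ordinal) ∈ Ico 1 α := ⟨le_rfl, Ordinal.one_lt_of_isSuccLimit hα⟩
    have hf : MonotoneOn f (Ico 1 α) := fun β hβ γ hγ hβγ => ((ih γ hγ.2).2.2 β ⟨hβ.1, hβγ⟩).1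
    have hg : AntitoneOn g (Ico 1 α) := fun β hβ γ hγ hβγ => ((ih γ hγ.2).2.2 β ⟨hβ.1, hβγ⟩).2
    have hfg : ∀ β ∈ Ico 1 α, f β ≤ g β := fun β hβ => (ih β hβ.2).2.1 hβ.1
    have hf_le : ∀ β ∈ Ico 1 α, f β ≤ sSup (f '' Ico 1 α) := fun β hβ =>
      le_csSup ⟨g 1, forall_mem_image.2 fun _ hγ => hf.le_of_antitoneOn hg hfg hγ h1α⟩
        (mem_image_of_mem f hβ)
    have hg_ge : ∀ β ∈ Ico 1 α, sInf (g '' Ico 1 α) ≤ g β := fun β hβ =>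
      csInf_le ⟨f 1, forall_mem_image.2 fun _ hγ => hf.le_of_antitoneOn hg hfg h1α hγ⟩
        (mem_image_of_mem g hβ)
    have hsup_inf := csSup_image_le_csInf_image ⟨1, h1α⟩ hf hg hfg
    rw [tOrbit_limit hα]
    obtain ⟨hx₁, hy₁⟩ := (ih 1 h1α.2).1
    refine ⟨⟨hI.out hx₁ hy₁ ⟨hf_le 1 h1α, hsup_inf.trans (hg_ge 1 h1α)⟩,
      hI.out hx₁ hy₁ ⟨(hf_le 1 h1α).trans hsup_inf, hg_ge 1 h1α⟩⟩, fun _ => hsup_inf, ?_⟩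
    rintro β ⟨h1β, hβ⟩
    rcases hβ.eq_or_lt with rfl | hβα
    · rw [tOrbit_limit hα]; exact ⟨le_rfl, le_rfl⟩
    exact ⟨hf_le β ⟨h1β, hβα⟩, hg_ge β ⟨h1β, hβα⟩⟩

lemma tOrbit_mem (hI : I.OrdConnected) (hM : IsMean I M) (hN : IsMean I N)
    (hMN : ∀ x ∈ I, ∀ y ∈ I, M x y ≤ N x y) (hx : x ∈ I) (hy : y ∈ I) (α : Ordinal.{0}) :
    tOrbit M N x y α ∈ I ×ˢ I :=
  (tOrbit_mem_and_monotone hI hM hN hMN hx hy α).1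

lemma tOrbit_fst_monotoneOn (hI : I.OrdConnected) (hM : IsMean I M) (hN : IsMean I N)
    (hMN : ∀ x ∈ I, ∀ y ∈ I, M x y ≤ N x y) (hx : x ∈ I) (hy : y ∈ I) :
    MonotoneOn (fun α => (tOrbit M N x y α).1) (Ici 1) := fun β hβ α _ hβα =>
  ((tOrbit_mem_and_monotone hI hM hN hMN hx hy α).2.2 β ⟨hβ, hβα⟩).1

lemma tOrbit_snd_antitoneOn (hI : I.OrdConnected) (hM : IsMean I M) (hN : IsMean I N)
    (hMN : ∀ x ∈ I, ∀ y ∈ I, M x y ≤ N x y) (hx : x ∈ I) (hy : y ∈ I) :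
    AntitoneOn (fun α => (tOrbit M N x y α).2) (Ici 1) := fun β hβ α _ hβα =>
  ((tOrbit_mem_and_monotone hI hM hN hMN hx hy α).2.2 β ⟨hβ, hβα⟩).2

lemma apply_tOrbit_eq_of_isInvariantMean (hI : I.OrdConnected) (hM : IsMean I M)
    (hN : IsMean I N) (hMN : ∀ x ∈ I, ∀ y ∈ I, M x y ≤ N x y) (hx : x ∈ I) (hy : y ∈ I)
    {K : ℝ → ℝ → ℝ} (hKinv : IsInvariantMean I M N K)
    (hKcont : ContinuousOn (fun p : ℝ × ℝ => K p.1 p.2) (I ×ˢ I)) (α : Ordinal.{0}) :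
    K (tOrbit M N x y α).1 (tOrbit M N x y α).2 = K x y := by
  have hmem := tOrbit_mem hI hM hN hMN hx hy
  induction α using Ordinal.limitRecOn with
  | zero => rw [tOrbit_zero]
  | add_one γ ih => rw [tOrbit_add_one, ← hKinv _ (hmem γ).1 _ (hmem γ).2, ih]
  | limit α hα ih =>
    have h1α : (1 : Ordinal) ∈ Ico 1 α := ⟨le_rfl, Ordinal.one_lt_of_isSuccLimit hα⟩
    have : Nonempty (Ico (1 : Ordinal) α) := ⟨⟨1, h1α⟩⟩
    have hsub : Ico 1 α ⊆ Ici 1 := Ico_subset_Ici_self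
    have hf := (tOrbit_fst_monotoneOn hI hM hN hMN hx hy).mono hsub
    have hg := (tOrbit_snd_antitoneOn hI hM hN hMN hx hy).mono hsub
    have hf_bdd : BddAbove ((fun β => (tOrbit M N x y β).1) '' Ico 1 α) :=
      ⟨_, forall_mem_image.2 fun β hβ =>
        tOrbit_fst_monotoneOn hI hM hN hMN hx hy hβ.1 h1α.2.le hβ.2.le⟩
    have hg_bdd : BddBelow ((fun β => (tOrbit M N x y β).2) '' Ico 1 α) :=
      ⟨_, forall_mem_image.2 fun β hβ =>
        tOrbit_snd_antitoneOn hI hM hN hMN hx hy hβ.1 h1α.2.le hβ.2.le⟩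
    have hlim : Tendsto (fun β : Ico 1 α => tOrbit M N x y β) atTop
        (𝓝[I ×ˢ I] tOrbit M N x y α) := by
      refine tendsto_nhdsWithin_iff.2 ⟨?_, Eventually.of_forall fun β => hmem β⟩
      rw [tOrbit_limit hα]
      exact (hf.tendsto_atTop_csSup_image hf_bdd).prodMk_nhds
        (hg.tendsto_atTop_csInf_image hg_bdd)
    have hK := (hKcont _ (hmem α)).tendsto.comp hlim
    exact tendsto_nhds_unique hK (tendsto_const_nhds.congr fun β => (ih β β.2.2).symm)

lemma tOrbit_omega_one_fst_eq_snd (hI : I.OrdConnected) (hM : IsMean I M) (hN : IsMean I N)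
    (hMN : ∀ x ∈ I, ∀ y ∈ I, M x y ≤ N x y)
    (hcontr : ∀ x ∈ I, ∀ y ∈ I, x ≠ y → |M x y - N x y| < |x - y|) (hx : x ∈ I) (hy : y ∈ I) :
    (tOrbit M N x y ω₁).1 = (tOrbit M N x y ω₁).2 := by
  have hω : Order.IsSuccLimit (ω₁ : Ordinal.{0}) := Cardinal.isSuccLimit_omega 1
  have h1ω : (1 : Ordinal.{0}) < ω₁ := Ordinal.one_lt_of_isSuccLimit hω
  have hf := tOrbit_fst_monotoneOn hI hM hN hMN hx hy
  have hg := tOrbit_snd_antitoneOn hI hM hN hMN hx hy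
  have hlim := tOrbit_limit (M := M) (N := N) (x := x) (y := y) hω
  have hsub : Ico 1 ω₁ ⊆ Ici 1 := Ico_subset_Ici_self
  obtain ⟨γ₁, hγ₁, hfγ₁⟩ := (hf.mono hsub).exists_eq_csSup_image_Ico_omega_one h1ω
    ⟨_, forall_mem_image.2 fun β hβ => hf hβ.1 h1ω.le hβ.2.le⟩
  obtain ⟨γ₂, hγ₂, hgγ₂⟩ := (hg.mono hsub).exists_eq_csInf_image_Ico_omega_one h1ω
    ⟨_, forall_mem_image.2 fun β hβ => hg hβ.1 h1ω.le hβ.2.le⟩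
  replace hfγ₁ : _ = (tOrbit M N x y ω₁).1 := hfγ₁.trans (by rw [hlim])
  replace hgγ₂ : _ = (tOrbit M N x y ω₁).2 := hgγ₂.trans (by rw [hlim])
  set u := (tOrbit M N x y ω₁).1
  set v := (tOrbit M N x y ω₁).2
  have hu : ∀ δ, γ₁ ≤ δ → δ ≤ ω₁ → (tOrbit M N x y δ).1 = u := fun δ h₁ h₂ =>
    le_antisymm (hf (hγ₁.1.trans h₁) h1ω.le h₂) (hfγ₁ ▸ hf hγ₁.1 (hγ₁.1.trans h₁) h₁)
  have hv : ∀ δ, γ₂ ≤ δ → δ ≤ ω₁ → (tOrbit M N x y δ).2 = v := fun δ h₁ h₂ =>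
    le_antisymm (hgγ₂ ▸ hg hγ₂.1 (hγ₂.1.trans h₁) h₁) (hg (hγ₂.1.trans h₁) h1ω.le h₂)
  set γ := max γ₁ γ₂
  have hγ : γ < ω₁ := max_lt hγ₁.2 hγ₂.2
  have hγ' : γ + 1 ≤ ω₁ := (hω.add_one_lt hγ).le
  have hfix : M u v = u ∧ N u v = v := by
    have h₁ := hu (γ + 1) ((le_max_left _ _).trans le_self_add) hγ'
    have h₂ := hv (γ + 1) ((le_max_right _ _).trans le_self_add) hγ'
    rw [tOrbit_add_one, hu γ (le_max_left _ _) hγ.le, hv γ (le_max_right _ _) hγ.le] at h₁ h₂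
    exact ⟨h₁, h₂⟩
  obtain ⟨huI, hvI⟩ := tOrbit_mem hI hM hN hMN hx hy ω₁
  by_contra huv
  exact (hcontr u huI v hvI huv).ne (by rw [hfix.1, hfix.2])

end Orbit

/-- every continuous `(M,N)`-invariant mean coincides with the
transfinite invariant mean `Tr`; in particular there is at most one continuous
`(M,N)`-invariant mean. -/
theorem stmt12 (I : Set ℝ) (hI : I.OrdConnected) (M N : ℝ → ℝ → ℝ)
    (hM : IsMean I M) (hN : IsMean I N)
    (hMN : ∀ x ∈ I, ∀ y ∈ I, M x y ≤ N x y)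
    (hcontr : ∀ x ∈ I, ∀ y ∈ I, x ≠ y → |M x y - N x y| < |x - y|)
    (K : ℝ → ℝ → ℝ) (hK : IsMean I K) (hKinv : IsInvariantMean I M N K)
    (hKcont : ContinuousOn (fun p : ℝ × ℝ => K p.1 p.2) (I ×ˢ I)) :
    ∀ x ∈ I, ∀ y ∈ I, K x y = Tr M N x y := by
  intro x hx y hy
  have hdiag := tOrbit_omega_one_fst_eq_snd hI hM hN hMN hcontr hx hy
  calc K x y = K (tOrbit M N x y ω₁).1 (tOrbit M N x y ω₁).2 :=
        (apply_tOrbit_eq_of_isInvariantMean hI hM hN hMN hx hy hKinv hKcont ω₁).symm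
    _ = K (Tr M N x y) (Tr M N x y) := by rw [← hdiag]; rfl
    _ = Tr M N x y := hK.apply_self (tOrbit_mem hI hM hN hMN hx hy ω₁).1
end

section
/- Let M, N : I² → I be means with M ≤ N satisfying |M(x,y)−N(x,y)| < |x−y| for x ≠ y, and suppose additionally that M and N are continuous. Then Lo = Up, i.e. the orbit sequences (xₙ) and (yₙ) converge to a common limit for all x,y ∈ I, and this common limit K(x,y) is the unique (M,N)-invariant mean, which is moreover continuous. -/
noncomputable def Lo (M N : ℝ → ℝ → ℝ) (x y : ℝ) : ℝ :=
  Filter.liminf (fun n => min (orbit M N x y n).1 (orbit M N x y n).2) Filter.atTop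

noncomputable def Up (M N : ℝ → ℝ → ℝ) (x y : ℝ) : ℝ :=
  Filter.limsup (fun n => max (orbit M N x y n).1 (orbit M N x y n).2) Filter.atTop

/-!
The minimum of the orbit pair increases and its maximum decreases, so they converge to `Lo ≤ Up`.
If `p` is a cluster point of the orbit, then `min p = Lo` and `max p = Up`, so `|p.1 - p.2| = Up - Lo`.
By continuity `(M p, N p)` is again a cluster point, hence `|M p - N p| = |p.1 - p.2|`, and the
strict contraction forces `p.1 = p.2`, i.e. `Lo = Up`. The common limit is then both a supremum and
an infimum of continuous functions of `(x, y)`, hence continuous, and an invariant mean `K` is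
trapped between the minimum and the maximum of every orbit pair, hence equals `Lo`.
-/

open Filter Topology Set

def meanMap (M N : ℝ → ℝ → ℝ) (p : ℝ × ℝ) : ℝ × ℝ := (M p.1 p.2, N p.1 p.2)

def orbitMin (M N : ℝ → ℝ → ℝ) (x y : ℝ) (n : ℕ) : ℝ := min (orbit M N x y n).1 (orbit M N x y n).2

def orbitMax (M N : ℝ → ℝ → ℝ) (x y : ℝ) (n : ℕ) : ℝ := max (orbit M N x y n).1 (orbit M N x y n).2

theorem MapClusterPt.eq_of_tendsto {α X : Type*} [TopologicalSpace X] [T2Space X] {F : Filter α}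
    {u : α → X} {a b : X} (ha : MapClusterPt a F u) (hb : Tendsto u F (𝓝 b)) : a = b :=
  eq_of_nhds_neBot (ha.clusterPt.mono hb).neBot

section Orbit

variable {I : Set ℝ} {M N K : ℝ → ℝ → ℝ} {x y : ℝ}

theorem orbit_eq_iterate (x y : ℝ) (n : ℕ) : orbit M N x y n = (meanMap M N)^[n] (x, y) := by
  induction n with
  | zero => rfl
  | succ n ih => rw [Function.iterate_succ_apply', ← ih]; rfl

theorem orbit_succ' (x y : ℝ) (n : ℕ) :
    orbit M N x y (n + 1) = orbit M N (M x y) (N x y) n := by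
  rw [orbit_eq_iterate, orbit_eq_iterate, Function.iterate_succ_apply]
  rfl

theorem Lo_meanMap (x y : ℝ) : Lo M N (M x y) (N x y) = Lo M N x y := by
  simp only [Lo, ← orbit_succ']
  exact liminf_nat_add (orbitMin M N x y) 1

theorem IsMean.mem_uIcc (hK : IsMean I K) (hx : x ∈ I) (hy : y ∈ I) : K x y ∈ uIcc x y :=
  (hK x hx y hy).2

theorem IsMean.mapsTo_meanMap (hM : IsMean I M) (hN : IsMean I N) :
    MapsTo (meanMap M N) (I ×ˢ I) (I ×ˢ I) :=
  fun _ hp => ⟨(hM _ hp.1 _ hp.2).1, (hN _ hp.1 _ hp.2).1⟩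

theorem IsMean.orbit_mem (hM : IsMean I M) (hN : IsMean I N) (hx : x ∈ I) (hy : y ∈ I) (n : ℕ) :
    orbit M N x y n ∈ I ×ˢ I := by
  rw [orbit_eq_iterate]
  exact (hM.mapsTo_meanMap hN).iterate n ⟨hx, hy⟩

theorem isInvariantMean_Lo : IsInvariantMean I M N (Lo M N) :=
  fun x _ y _ => (Lo_meanMap x y).symm

theorem IsInvariantMean.apply_orbit (hK : IsInvariantMean I M N K) (hM : IsMean I M)
    (hN : IsMean I N) (hx : x ∈ I) (hy : y ∈ I) (n : ℕ) :
    K (orbit M N x y n).1 (orbit M N x y n).2 = K x y := by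
  induction n with
  | zero => rfl
  | succ n ih =>
    obtain ⟨h1, h2⟩ := hM.orbit_mem hN hx hy n
    rw [← ih, hK _ h1 _ h2]
    rfl

theorem continuousOn_orbit (hM : IsMean I M) (hN : IsMean I N)
    (hcont : ContinuousOn (meanMap M N) (I ×ˢ I)) (n : ℕ) :
    ContinuousOn (fun p : ℝ × ℝ => orbit M N p.1 p.2 n) (I ×ˢ I) := by
  simpa only [orbit_eq_iterate] using hcont.iterate (hM.mapsTo_meanMap hN) n

variable (hM : IsMean I M) (hN : IsMean I N) (hx : x ∈ I) (hy : y ∈ I)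
include hM hN hx hy

theorem monotone_orbitMin : Monotone (orbitMin M N x y) := by
  refine monotone_nat_of_le_succ fun n => ?_
  obtain ⟨h1, h2⟩ := hM.orbit_mem hN hx hy n
  exact le_min (hM.mem_uIcc h1 h2).1 (hN.mem_uIcc h1 h2).1

theorem antitone_orbitMax : Antitone (orbitMax M N x y) := by
  refine antitone_nat_of_succ_le fun n => ?_
  obtain ⟨h1, h2⟩ := hM.orbit_mem hN hx hy n
  exact max_le (hM.mem_uIcc h1 h2).2 (hN.mem_uIcc h1 h2).2

theorem orbit_mem_uIcc (n : ℕ) : orbit M N x y n ∈ uIcc x y ×ˢ uIcc x y := by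
  have hmin := monotone_orbitMin hM hN hx hy n.zero_le
  have hmax := antitone_orbitMax hM hN hx hy n.zero_le
  simp only [orbitMin, orbitMax, orbit] at hmin hmax
  exact ⟨⟨hmin.trans (min_le_left _ _), (le_max_left _ _).trans hmax⟩,
    ⟨hmin.trans (min_le_right _ _), (le_max_right _ _).trans hmax⟩⟩

theorem bddAbove_range_orbitMin : BddAbove (range (orbitMin M N x y)) :=
  ⟨max x y, forall_mem_range.2 fun n => min_le_of_left_le (orbit_mem_uIcc hM hN hx hy n).1.2⟩

theorem bddBelow_range_orbitMax : BddBelow (range (orbitMax M N x y)) :=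
  ⟨min x y, forall_mem_range.2 fun n => le_max_of_le_left (orbit_mem_uIcc hM hN hx hy n).1.1⟩

theorem Lo_eq_iSup : Lo M N x y = ⨆ n, orbitMin M N x y n :=
  (tendsto_atTop_ciSup (monotone_orbitMin hM hN hx hy)
    (bddAbove_range_orbitMin hM hN hx hy)).liminf_eq

theorem Up_eq_iInf : Up M N x y = ⨅ n, orbitMax M N x y n :=
  (tendsto_atTop_ciInf (antitone_orbitMax hM hN hx hy)
    (bddBelow_range_orbitMax hM hN hx hy)).limsup_eq

theorem tendsto_orbitMin : Tendsto (orbitMin M N x y) atTop (𝓝 (Lo M N x y)) :=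
  Lo_eq_iSup hM hN hx hy ▸
    tendsto_atTop_ciSup (monotone_orbitMin hM hN hx hy) (bddAbove_range_orbitMin hM hN hx hy)

theorem tendsto_orbitMax : Tendsto (orbitMax M N x y) atTop (𝓝 (Up M N x y)) :=
  Up_eq_iInf hM hN hx hy ▸
    tendsto_atTop_ciInf (antitone_orbitMax hM hN hx hy) (bddBelow_range_orbitMax hM hN hx hy)

theorem orbitMin_le_Lo (n : ℕ) : orbitMin M N x y n ≤ Lo M N x y :=
  (monotone_orbitMin hM hN hx hy).ge_of_tendsto (tendsto_orbitMin hM hN hx hy) n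

theorem Lo_mem_uIcc : Lo M N x y ∈ uIcc x y :=
  ⟨orbitMin_le_Lo hM hN hx hy 0, Lo_eq_iSup hM hN hx hy ▸
    ciSup_le fun n => min_le_of_left_le (orbit_mem_uIcc hM hN hx hy n).1.2⟩

theorem Up_sub_Lo_eq_abs_of_mapClusterPt {p : ℝ × ℝ} (hp : MapClusterPt p atTop (orbit M N x y)) :
    Up M N x y - Lo M N x y = |p.1 - p.2| := by
  have hmin : min p.1 p.2 = Lo M N x y :=
    (hp.continuousAt_comp (f := fun q : ℝ × ℝ => min q.1 q.2) (by fun_prop)).eq_of_tendsto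
      (tendsto_orbitMin hM hN hx hy)
  have hmax : max p.1 p.2 = Up M N x y :=
    (hp.continuousAt_comp (f := fun q : ℝ × ℝ => max q.1 q.2) (by fun_prop)).eq_of_tendsto
      (tendsto_orbitMax hM hN hx hy)
  rw [← hmin, ← hmax, max_sub_min_eq_abs']

theorem exists_mapClusterPt_orbit (hI : I.OrdConnected) :
    ∃ p ∈ I ×ˢ I, MapClusterPt p atTop (orbit M N x y) := by
  obtain ⟨p, hp, hcluster⟩ := (isCompact_uIcc.prod isCompact_uIcc).exists_mapClusterPt (f := atTop)
    (tendsto_principal.2 (Eventually.of_forall (orbit_mem_uIcc hM hN hx hy)))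
  exact ⟨p, prod_mono (hI.uIcc_subset hx hy) (hI.uIcc_subset hx hy) hp, hcluster⟩

theorem mapClusterPt_meanMap_orbit (hcont : ContinuousOn (meanMap M N) (I ×ˢ I))
    {p : ℝ × ℝ} (hpI : p ∈ I ×ˢ I) (hp : MapClusterPt p atTop (orbit M N x y)) :
    MapClusterPt (meanMap M N p) atTop (orbit M N x y) := by
  have horbit : Tendsto (orbit M N x y) atTop (𝓟 (I ×ˢ I)) :=
    tendsto_principal.2 (Eventually.of_forall (hM.orbit_mem hN hx hy))
  have hF : Tendsto (meanMap M N) (𝓝 p ⊓ map (orbit M N x y) atTop) (𝓝 (meanMap M N p)) :=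
    (hcont p hpI).tendsto.mono_left (inf_le_inf_left _ horbit)
  -- `meanMap M N ∘ orbit M N x y` is the shifted orbit `fun n => orbit M N x y (n + 1)`.
  have hshift : MapClusterPt (meanMap M N p) atTop (meanMap M N ∘ orbit M N x y) :=
    hp.tendsto_comp' hF
  exact MapClusterPt.of_comp (u := orbit M N x y) (tendsto_add_atTop_nat 1) hshift

end Orbit

section InvariantMean

variable {I : Set ℝ} {M N K : ℝ → ℝ → ℝ} {x y : ℝ}

theorem IsInvariantMean.eq_Lo (hKinv : IsInvariantMean I M N K) (hK : IsMean I K)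
    (hM : IsMean I M) (hN : IsMean I N) (hx : x ∈ I) (hy : y ∈ I)
    (hLoUp : Lo M N x y = Up M N x y) : K x y = Lo M N x y := by
  have hmem (n : ℕ) : K x y ∈ Icc (orbitMin M N x y n) (orbitMax M N x y n) := by
    obtain ⟨h1, h2⟩ := hM.orbit_mem hN hx hy n
    rw [← hKinv.apply_orbit hM hN hx hy n]
    exact hK.mem_uIcc h1 h2
  refine le_antisymm ?_ ?_
  · rw [hLoUp]
    exact ge_of_tendsto (tendsto_orbitMax hM hN hx hy) (Eventually.of_forall fun n => (hmem n).2)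
  · exact le_of_tendsto (tendsto_orbitMin hM hN hx hy) (Eventually.of_forall fun n => (hmem n).1)

theorem isMean_Lo (hI : I.OrdConnected) (hM : IsMean I M) (hN : IsMean I N) :
    IsMean I (Lo M N) := fun _ hx _ hy =>
  ⟨hI.uIcc_subset hx hy (Lo_mem_uIcc hM hN hx hy), Lo_mem_uIcc hM hN hx hy⟩

variable (hI : I.OrdConnected) (hM : IsMean I M) (hN : IsMean I N)
  (hcont : ContinuousOn (meanMap M N) (I ×ˢ I))
  (hcontr : ∀ x ∈ I, ∀ y ∈ I, x ≠ y → |M x y - N x y| < |x - y|)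
include hI hM hN hcont hcontr

theorem Lo_eq_Up (hx : x ∈ I) (hy : y ∈ I) : Lo M N x y = Up M N x y := by
  obtain ⟨p, hpI, hp⟩ := exists_mapClusterPt_orbit hM hN hx hy hI
  have hdiag := Up_sub_Lo_eq_abs_of_mapClusterPt hM hN hx hy hp
  have himage := Up_sub_Lo_eq_abs_of_mapClusterPt hM hN hx hy
    (mapClusterPt_meanMap_orbit hM hN hx hy hcont hpI hp)
  by_contra hne
  have hp12 : p.1 ≠ p.2 := by
    intro h
    rw [h, sub_self, abs_zero, sub_eq_zero] at hdiag
    exact hne hdiag.symm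
  exact (hcontr _ hpI.1 _ hpI.2 hp12).ne (himage.symm.trans hdiag)

theorem tendsto_orbit_fst (hx : x ∈ I) (hy : y ∈ I) :
    Tendsto (fun n => (orbit M N x y n).1) atTop (𝓝 (Lo M N x y)) :=
  tendsto_of_tendsto_of_tendsto_of_le_of_le (tendsto_orbitMin hM hN hx hy)
    (Lo_eq_Up hI hM hN hcont hcontr hx hy ▸ tendsto_orbitMax hM hN hx hy)
    (fun _ => min_le_left _ _) (fun _ => le_max_left _ _)

theorem tendsto_orbit_snd (hx : x ∈ I) (hy : y ∈ I) :
    Tendsto (fun n => (orbit M N x y n).2) atTop (𝓝 (Lo M N x y)) :=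
  tendsto_of_tendsto_of_tendsto_of_le_of_le (tendsto_orbitMin hM hN hx hy)
    (Lo_eq_Up hI hM hN hcont hcontr hx hy ▸ tendsto_orbitMax hM hN hx hy)
    (fun _ => min_le_right _ _) (fun _ => le_max_right _ _)

theorem continuousOn_Lo : ContinuousOn (fun p : ℝ × ℝ => Lo M N p.1 p.2) (I ×ˢ I) := by
  intro p hp
  have hcontMin (n : ℕ) : ContinuousOn (fun q : ℝ × ℝ => orbitMin M N q.1 q.2 n) (I ×ˢ I) :=
    (show Continuous fun q : ℝ × ℝ => min q.1 q.2 by fun_prop).comp_continuousOn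
      (continuousOn_orbit hM hN hcont n)
  have hcontMax (n : ℕ) : ContinuousOn (fun q : ℝ × ℝ => orbitMax M N q.1 q.2 n) (I ×ˢ I) :=
    (show Continuous fun q : ℝ × ℝ => max q.1 q.2 by fun_prop).comp_continuousOn
      (continuousOn_orbit hM hN hcont n)
  have hsup := lowerSemicontinuousOn_ciSup
    (fun q hq => bddAbove_range_orbitMin hM hN hq.1 hq.2) fun n => (hcontMin n).lowerSemicontinuousOn
  have hinf := upperSemicontinuousOn_ciInf
    (fun q hq => bddBelow_range_orbitMax hM hN hq.1 hq.2) fun n => (hcontMax n).upperSemicontinuousOn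
  rw [continuousWithinAt_iff_lower_upperSemicontinuousWithinAt]
  constructor
  · refine LowerSemicontinuousWithinAt.congr_of_eventuallyEq (hsup p hp) hp
      (eventually_nhdsWithin_of_forall fun q hq => ?_)
    exact (Lo_eq_iSup hM hN hq.1 hq.2).symm
  · refine UpperSemicontinuousWithinAt.congr_of_eventuallyEq (hinf p hp) hp
      (eventually_nhdsWithin_of_forall fun q hq => ?_)
    rw [Lo_eq_Up hI hM hN hcont hcontr hq.1 hq.2, Up_eq_iInf hM hN hq.1 hq.2]

end InvariantMean

/-- the classical Borwein–Borwein/Matkowski theorem: if `M`, `N` are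
continuous means with `|M(x,y) − N(x,y)| < |x − y|` for `x ≠ y`, then both orbit
sequences converge to the common limit `Lo(x,y) = Up(x,y)`, which is the unique
`(M,N)`-invariant mean, and it is continuous. -/
theorem stmt19 (I : Set ℝ) (hI : I.OrdConnected) (M N : ℝ → ℝ → ℝ)
    (hM : IsMean I M) (hN : IsMean I N)
    (hMcont : ContinuousOn (fun p : ℝ × ℝ => M p.1 p.2) (I ×ˢ I))
    (hNcont : ContinuousOn (fun p : ℝ × ℝ => N p.1 p.2) (I ×ˢ I))
    (hcontr : ∀ x ∈ I, ∀ y ∈ I, x ≠ y → |M x y - N x y| < |x - y|) :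
    (∀ x ∈ I, ∀ y ∈ I,
      Lo M N x y = Up M N x y ∧
      Filter.Tendsto (fun n => (orbit M N x y n).1) Filter.atTop (nhds (Lo M N x y)) ∧
      Filter.Tendsto (fun n => (orbit M N x y n).2) Filter.atTop (nhds (Lo M N x y))) ∧
    IsMean I (Lo M N) ∧ IsInvariantMean I M N (Lo M N) ∧
    ContinuousOn (fun p : ℝ × ℝ => Lo M N p.1 p.2) (I ×ˢ I) ∧
    (∀ K : ℝ → ℝ → ℝ, IsMean I K → IsInvariantMean I M N K →
      ∀ x ∈ I, ∀ y ∈ I, K x y = Lo M N x y) := by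
  have hcont : ContinuousOn (meanMap M N) (I ×ˢ I) := hMcont.prodMk hNcont
  refine ⟨fun x hx y hy => ⟨Lo_eq_Up hI hM hN hcont hcontr hx hy,
      tendsto_orbit_fst hI hM hN hcont hcontr hx hy, tendsto_orbit_snd hI hM hN hcont hcontr hx hy⟩,
    isMean_Lo hI hM hN, isInvariantMean_Lo, continuousOn_Lo hI hM hN hcont hcontr, ?_⟩
  intro K hK hKinv x hx y hy
  exact hKinv.eq_Lo hK hM hN hx hy (Lo_eq_Up hI hM hN hcont hcontr hx hy)
end
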